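/- Let q0, q1, q2 ∈ ℝ[u] have degree at most m ≥ 1, define F(x1,x2) = B_m(q1 − x1·q0, q2 − x2·q0) and p(x1,x2) = det F(x1,x2). If the Bézout matrix B_m(q1,q2) = F(0,0) is positive semidefinite, then p satisfies the real zero condition at the origin: for every z ∈ ℝ² such that the univariate polynomial t ↦ p(t·z) is not the zero polynomial, every complex root of t ↦ p(t·z) is real. -/

import Mathlib

/-- The Bézout matrix `B_m(g,h)` of two univariate polynomials of degree at most `m`:
the `m × m` symmetric matrix `(b_{kl})` determined by
`g(u)h(v) − g(v)h(u) = (u − v) ∑_{k,l=0}^{m−1} b_{kl} u^k v^l`. Working in `R[v][u]`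
(outer variable `u`, inner variable `v`), `u − v` is the monic polynomial `X − C X`, and
`b_{kl}` is the coefficient of `u^k v^l` of the exact quotient. -/
noncomputable def bezoutMatrix (R : Type*) [CommRing R] (m : ℕ) (g h : Polynomial R) :
    Matrix (Fin m) (Fin m) R :=
  Matrix.of fun k l : Fin m =>
    (((g.map (Polynomial.C : R →+* Polynomial R) * Polynomial.C h -
        Polynomial.C g * h.map (Polynomial.C : R →+* Polynomial R)) /ₘ
      (Polynomial.X - Polynomial.C Polynomial.X)).coeff (k : ℕ)).coeff (l : ℕ)


/-! Expanding the Bézoutian bilinearly, `F(t z) = A + t B` with `A = B_m(q1,q2)` positive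
semidefinite and `B = -(z₂ B_m(q1,q0) + z₁ B_m(q0,q2))` real symmetric (the Bézoutian and
`u − v` are both antisymmetric under `u ↔ v`). If `(A + w B) v = 0` for a non-real `w`, then
`v* A v + w v* B v = 0` with both quadratic forms real, so both vanish; semidefiniteness gives
`A v = 0`, hence `B v = 0`, and `det (A + t B)` vanishes for every `t`. -/

open Polynomial

section Bezout

variable {R S : Type*} [CommRing R] [CommRing S]

noncomputable def bezoutNumerator (g h : R[X]) : R[X][X] :=
  g.map (C : R →+* R[X]) * C h - C g * h.map (C : R →+* R[X])

noncomputable def bezoutQuotient (g h : R[X]) : R[X][X] :=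
  bezoutNumerator g h /ₘ (X - C X)

lemma bezoutMatrix_apply (m : ℕ) (g h : R[X]) (k l : Fin m) :
    bezoutMatrix R m g h k l = ((bezoutQuotient g h).coeff k).coeff l :=
  rfl

lemma X_sub_C_X_mul_bezoutQuotient (g h : R[X]) :
    (X - C X) * bezoutQuotient g h = bezoutNumerator g h :=
  mul_divByMonic_eq_iff_isRoot.2 <| by
    simp [bezoutNumerator, IsRoot, eval_map, eval₂_C_X, mul_comm]

lemma bezoutQuotient_eq_of_mul_eq {g h : R[X]} {Q : R[X][X]}
    (hQ : (X - C X) * Q = bezoutNumerator g h) : bezoutQuotient g h = Q := by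
  rw [bezoutQuotient, ← hQ, mul_divByMonic_cancel_left _ (monic_X_sub_C X)]

lemma bezoutMatrix_map (φ : R →+* S) (m : ℕ) (g h : R[X]) :
    bezoutMatrix S m (g.map φ) (h.map φ) = (bezoutMatrix R m g h).map φ := by
  have hnum : (bezoutNumerator g h).map (mapRingHom φ) =
      bezoutNumerator (g.map φ) (h.map φ) := by
    simp only [bezoutNumerator, Polynomial.map_sub, Polynomial.map_mul, map_C, map_map,
      coe_mapRingHom]
    congr 3 <;> ext <;> simp
  have hquot : (bezoutQuotient g h).map (mapRingHom φ) =
      bezoutQuotient (g.map φ) (h.map φ) := by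
    rw [bezoutQuotient, map_divByMonic _ (monic_X_sub_C X), hnum]
    simp [bezoutQuotient]
  ext k l
  rw [Matrix.map_apply, bezoutMatrix_apply, bezoutMatrix_apply, ← hquot, coeff_map,
    coe_mapRingHom, coeff_map]

lemma bezoutQuotient_sub_C_mul (g₀ g₁ g₂ : R[X]) (a b : R) :
    bezoutQuotient (g₁ - C a * g₀) (g₂ - C b * g₀) =
      bezoutQuotient g₁ g₂ - C (C b) * bezoutQuotient g₁ g₀ -
        C (C a) * bezoutQuotient g₀ g₂ := by
  apply bezoutQuotient_eq_of_mul_eq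
  simp only [mul_sub, mul_left_comm (X - C X : R[X][X]) (C (C _)),
    X_sub_C_X_mul_bezoutQuotient, bezoutNumerator, Polynomial.map_sub, Polynomial.map_mul,
    map_C, map_sub, map_mul]
  ring

lemma bezoutMatrix_sub_C_mul (m : ℕ) (g₀ g₁ g₂ : R[X]) (a b : R) :
    bezoutMatrix R m (g₁ - C a * g₀) (g₂ - C b * g₀) =
      bezoutMatrix R m g₁ g₂ - b • bezoutMatrix R m g₁ g₀ - a • bezoutMatrix R m g₀ g₂ := by
  ext k l
  simp only [bezoutMatrix_apply, bezoutQuotient_sub_C_mul, Matrix.sub_apply,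
    Matrix.smul_apply, coeff_sub, coeff_C_mul, smul_eq_mul]

lemma coeff_coeff_swap (p : R[X][X]) (k l : ℕ) :
    ((Bivariate.swap p).coeff k).coeff l = (p.coeff l).coeff k := by
  induction p using Polynomial.induction_on' with
  | add p q hp hq => simp only [map_add, coeff_add, hp, hq]
  | monomial j q =>
    induction q using Polynomial.induction_on' with
    | add p q hp hq => simp only [map_add, coeff_add, hp, hq]
    | monomial i a =>
      rw [Bivariate.swap_monomial_monomial]
      simp only [coeff_monomial]
      split_ifs <;> simp [coeff_monomial, *]

lemma swap_bezoutQuotient (g h : R[X]) :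
    Bivariate.swap (bezoutQuotient g h) = bezoutQuotient g h := by
  symm
  apply bezoutQuotient_eq_of_mul_eq
  have hnum : Bivariate.swap (bezoutNumerator g h) = -bezoutNumerator g h := by
    simp only [bezoutNumerator, map_sub, map_mul, Bivariate.swap_C, Bivariate.swap_map_C]
    ring
  have hden : Bivariate.swap (X - C X : R[X][X]) = -(X - C X) := by
    rw [map_sub, Bivariate.swap_Y, Bivariate.swap_X, neg_sub]
  have hswap := congrArg Bivariate.swap (X_sub_C_X_mul_bezoutQuotient g h)
  rw [map_mul, hden, hnum] at hswap
  linear_combination -hswap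

lemma isSymm_bezoutMatrix (m : ℕ) (g h : R[X]) : (bezoutMatrix R m g h).IsSymm := by
  ext k l
  conv_rhs => rw [bezoutMatrix_apply, ← swap_bezoutQuotient, coeff_coeff_swap]
  rfl

end Bezout

section Pencil

open Matrix
open scoped ComplexOrder

variable {n : Type*}

lemma Matrix.IsSymm.isHermitian_map_ofReal {B : Matrix n n ℝ} (hB : B.IsSymm) :
    (B.map (algebraMap ℝ ℂ)).IsHermitian := by
  ext i j
  simp [hB.apply i j]

lemma Matrix.PosSemidef.map_ofReal [Fintype n] {A : Matrix n n ℝ} (hA : A.PosSemidef) :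
    (A.map (algebraMap ℝ ℂ)).PosSemidef := by
  classical
  obtain ⟨B, rfl⟩ : ∃ B : Matrix n n ℝ, A = star B * B := by
    open scoped MatrixOrder Matrix.Norms.L2Operator in
    exact CStarAlgebra.nonneg_iff_eq_star_mul_self.mp hA.nonneg
  rw [Matrix.map_mul, star_eq_conjTranspose,
    conjTranspose_map (algebraMap ℝ ℂ) fun x => by simp]
  exact posSemidef_conjTranspose_mul_self _

lemma Matrix.PosSemidef.mulVec_eq_zero_of_add_smul_mulVec_eq_zero [Fintype n]
    {A B : Matrix n n ℂ} (hA : A.PosSemidef) (hB : B.IsHermitian) {w : ℂ} (hw : w.im ≠ 0)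
    {v : n → ℂ} (hv : (A + w • B) *ᵥ v = 0) : A *ᵥ v = 0 ∧ B *ᵥ v = 0 := by
  set a := star v ⬝ᵥ A *ᵥ v
  set b := star v ⬝ᵥ B *ᵥ v
  have hab : a + w * b = 0 := by
    simpa [add_mulVec, smul_mulVec, dotProduct_add, dotProduct_smul] using
      congrArg (star v ⬝ᵥ ·) hv
  have ha : a.im = 0 := (Complex.nonneg_iff.mp (hA.dotProduct_mulVec_nonneg v)).2.symm
  have hb : b.im = 0 := hB.im_star_dotProduct_mulVec_self v
  have hb0 : b = 0 := by
    have hre : w.im * b.re = 0 := by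
      simpa [Complex.mul_im, ha, hb] using congrArg Complex.im hab
    exact Complex.ext ((mul_eq_zero.1 hre).resolve_left hw) hb
  have hAv : A *ᵥ v = 0 :=
    (hA.dotProduct_mulVec_zero_iff v).1 (by simpa [hb0] using hab)
  refine ⟨hAv, ?_⟩
  rw [add_mulVec, smul_mulVec, hAv, zero_add] at hv
  exact (smul_eq_zero.1 hv).resolve_left fun h => hw (by simp [h])

lemma Matrix.PosSemidef.det_add_smul_eq_zero_of_im_ne_zero [Fintype n] [DecidableEq n]
    {A B : Matrix n n ℂ} (hA : A.PosSemidef) (hB : B.IsHermitian) {w : ℂ} (hw : w.im ≠ 0)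
    (hdet : (A + w • B).det = 0) (w' : ℂ) : (A + w' • B).det = 0 := by
  obtain ⟨v, hv0, hv⟩ := exists_mulVec_eq_zero_iff.2 hdet
  obtain ⟨hAv, hBv⟩ := hA.mulVec_eq_zero_of_add_smul_mulVec_eq_zero hB hw hv
  exact exists_mulVec_eq_zero_iff.1 ⟨v, hv0, by simp [add_mulVec, smul_mulVec, hAv, hBv]⟩

lemma Matrix.PosSemidef.im_eq_zero_of_isRoot_of_eval₂_eq_det [Fintype n] [DecidableEq n]
    {A B : Matrix n n ℝ} (hA : A.PosSemidef) (hB : B.IsSymm) {P : ℝ[X]}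
    (hP : ∀ w : ℂ, P.eval₂ (algebraMap ℝ ℂ) w =
      (A.map (algebraMap ℝ ℂ) + w • B.map (algebraMap ℝ ℂ)).det)
    (hP0 : P ≠ 0) {w : ℂ} (hw : (P.map (algebraMap ℝ ℂ)).IsRoot w) : w.im = 0 := by
  by_contra him
  have hdet := hA.map_ofReal.det_add_smul_eq_zero_of_im_ne_zero hB.isHermitian_map_ofReal him
    (by rwa [← hP, eval₂_eq_eval_map])
  refine hP0 <| Polynomial.map_injective _ (algebraMap ℝ ℂ).injective <|
    Polynomial.funext fun w' => ?_
  rw [← eval₂_eq_eval_map, hP, hdet, Polynomial.map_zero, eval_zero]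

end Pencil

section Evaluation

variable {R S : Type*} [CommRing R] [CommRing S]

lemma map_eval₂RingHom_sub_C_mul (f : R →+* S) (w : S) (q q' : R[X]) (a : R) :
    (q.map (C : R →+* R[X]) - C (C a * X) * q'.map (C : R →+* R[X])).map (eval₂RingHom f w) =
      q.map f - C (f a * w) * q'.map f := by
  simp only [Polynomial.map_sub, Polynomial.map_mul, map_C, map_map]
  have hf : (eval₂RingHom f w).comp (C : R →+* R[X]) = f := RingHom.ext fun _ => by simp
  simp [hf]

lemma eval₂_det_bezoutMatrix_pencil (f : R →+* S) (w : S) (m : ℕ) (q₀ q₁ q₂ : R[X])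
    (a b : R) :
    eval₂ f w (bezoutMatrix R[X] m
        (q₁.map (C : R →+* R[X]) - C (C a * X) * q₀.map (C : R →+* R[X]))
        (q₂.map (C : R →+* R[X]) - C (C b * X) * q₀.map (C : R →+* R[X]))).det =
      ((bezoutMatrix R m q₁ q₂).map f - (f b * w) • (bezoutMatrix R m q₁ q₀).map f -
        (f a * w) • (bezoutMatrix R m q₀ q₂).map f).det := by
  rw [← coe_eval₂RingHom, RingHom.map_det, RingHom.mapMatrix_apply,
    ← bezoutMatrix_map, map_eval₂RingHom_sub_C_mul, map_eval₂RingHom_sub_C_mul,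
    bezoutMatrix_sub_C_mul, bezoutMatrix_map, bezoutMatrix_map, bezoutMatrix_map]

end Evaluation

theorem stmt14_general (m : ℕ) (q0 q1 q2 : Polynomial ℝ)
    (p : ℝ → ℝ → ℝ)
    (hp : ∀ x1 x2 : ℝ,
      p x1 x2 = (bezoutMatrix ℝ m (q1 - x1 • q0) (q2 - x2 • q0)).det)
    (P : (Fin 2 → ℝ) → Polynomial ℝ)
    (hP : ∀ z : Fin 2 → ℝ,
      P z = (bezoutMatrix (Polynomial ℝ) m
        (q1.map (Polynomial.C : ℝ →+* Polynomial ℝ) -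
          Polynomial.C (Polynomial.C (z 0) * Polynomial.X) *
            q0.map (Polynomial.C : ℝ →+* Polynomial ℝ))
        (q2.map (Polynomial.C : ℝ →+* Polynomial ℝ) -
          Polynomial.C (Polynomial.C (z 1) * Polynomial.X) *
            q0.map (Polynomial.C : ℝ →+* Polynomial ℝ))).det)
    (hpsd : (bezoutMatrix ℝ m q1 q2).PosSemidef) :
    (∀ (z : Fin 2 → ℝ) (t : ℝ), (P z).eval t = p (t * z 0) (t * z 1)) ∧
    ∀ z : Fin 2 → ℝ, P z ≠ 0 →
      ∀ w : ℂ, ((P z).map (algebraMap ℝ ℂ)).IsRoot w → w.im = 0 := by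
  refine ⟨fun z t => ?_, fun z hPz w => ?_⟩
  · rw [hP, hp, ← eval₂_id, eval₂_det_bezoutMatrix_pencil, smul_eq_C_mul, smul_eq_C_mul,
      bezoutMatrix_sub_C_mul]
    simp [mul_comm]
  · set B := -(z 1 • bezoutMatrix ℝ m q1 q0 + z 0 • bezoutMatrix ℝ m q0 q2)
    have hB : B.IsSymm :=
      (((isSymm_bezoutMatrix m q1 q0).smul _).add ((isSymm_bezoutMatrix m q0 q2).smul _)).neg
    refine hpsd.im_eq_zero_of_isRoot_of_eval₂_eq_det hB (fun w' => ?_) hPz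
    rw [hP, eval₂_det_bezoutMatrix_pencil]
    congr 1
    ext k l
    simp only [B, Complex.coe_algebraMap, Matrix.sub_apply, Matrix.map_apply, Matrix.smul_apply,
      Matrix.add_apply, Matrix.neg_apply, smul_eq_mul, Complex.ofReal_add, Complex.ofReal_neg,
      Complex.ofReal_mul]
    ring

/-- Let `q0, q1, q2 ∈ ℝ[u]` of degree at most `m ≥ 1`, define
`F(x1,x2) = B_m(q1 − x1 q0, q2 − x2 q0)` and `p = det F`. If `B_m(q1,q2) = F(0,0)` is
positive semidefinite, then `p` satisfies the real zero condition at the origin: for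
every `z ∈ ℝ²` such that the univariate polynomial `t ↦ p (t z)` (obtained by the same
Bézoutian construction over `ℝ[t]`, with `x1 = z1 t`, `x2 = z2 t`) is not the zero
polynomial, every complex root of `t ↦ p (t z)` is real. -/
theorem stmt14 (m : ℕ) (hm : 1 ≤ m) (q0 q1 q2 : Polynomial ℝ)
    (hq0 : q0.degree ≤ m) (hq1 : q1.degree ≤ m) (hq2 : q2.degree ≤ m)
    (p : ℝ → ℝ → ℝ)
    (hp : ∀ x1 x2 : ℝ,
      p x1 x2 = (bezoutMatrix ℝ m (q1 - x1 • q0) (q2 - x2 • q0)).det)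
    (P : (Fin 2 → ℝ) → Polynomial ℝ)
    (hP : ∀ z : Fin 2 → ℝ,
      P z = (bezoutMatrix (Polynomial ℝ) m
        (q1.map (Polynomial.C : ℝ →+* Polynomial ℝ) -
          Polynomial.C (Polynomial.C (z 0) * Polynomial.X) *
            q0.map (Polynomial.C : ℝ →+* Polynomial ℝ))
        (q2.map (Polynomial.C : ℝ →+* Polynomial ℝ) -
          Polynomial.C (Polynomial.C (z 1) * Polynomial.X) *
            q0.map (Polynomial.C : ℝ →+* Polynomial ℝ))).det)
    (hpsd : (bezoutMatrix ℝ m q1 q2).PosSemidef) :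
    (∀ (z : Fin 2 → ℝ) (t : ℝ), (P z).eval t = p (t * z 0) (t * z 1)) ∧
    ∀ z : Fin 2 → ℝ, P z ≠ 0 →
      ∀ w : ℂ, ((P z).map (algebraMap ℝ ℂ)).IsRoot w → w.im = 0 :=
  stmt14_general m q0 q1 q2 p hp P hP hpsd
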